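/- Every galled network with n leaves has at most 2(n − 1) reticulation nodes. -/

import Mathlib

/-!
Framework for rooted phylogenetic networks, formalized as directed graphs
given by an adjacency relation `A : V → V → Prop` on a vertex type `V`,
with a distinguished root `ρ`.  Leaves are identified with their (unique)
labels, i.e. the labelling is the identity on leaf vertices.
-/

namespace PhyloNet

variable {V : Type} {W : Type}

/-- Indegree of a vertex. -/
noncomputable def inDeg (A : V → V → Prop) (v : V) : ℕ := {u | A u v}.ncard

/-- Outdegree of a vertex. -/
noncomputable def outDeg (A : V → V → Prop) (v : V) : ℕ := {w | A v w}.ncard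

/-- `p` is a directed path (walk) from `u` to `v`, given as the list of its vertices. -/
def IsPath (A : V → V → Prop) (u v : V) (p : List V) : Prop :=
  p.Chain' A ∧ p.head? = some u ∧ p.getLast? = some v

/-- `A` with root `ρ` is a phylogenetic network: a finite rooted acyclic digraph whose
root has indegree 0 and outdegree ≥ 2, from which every node is reachable, and in which
every non-root node is either a leaf (indegree 1, outdegree 0), an internal tree node
(indegree 1, outdegree ≥ 2) or a reticulation (indegree ≥ 2, outdegree 1). -/
structure IsNetwork (A : V → V → Prop) (ρ : V) : Prop where
  finite : Finite V
  acyclic : ∀ v, ¬ Relation.TransGen A v v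
  root_indeg : inDeg A ρ = 0
  root_outdeg : 2 ≤ outDeg A ρ
  reach_from_root : ∀ v, Relation.ReflTransGen A ρ v
  degree_cond : ∀ v, v ≠ ρ →
    (inDeg A v = 1 ∧ (outDeg A v = 0 ∨ 2 ≤ outDeg A v)) ∨ (2 ≤ inDeg A v ∧ outDeg A v = 1)

/-- Reticulation node: indegree ≥ 2 and outdegree 1. -/
def IsRet (A : V → V → Prop) (v : V) : Prop := 2 ≤ inDeg A v ∧ outDeg A v = 1

/-- Leaf: indegree 1 and outdegree 0. -/
def IsLeaf (A : V → V → Prop) (v : V) : Prop := inDeg A v = 1 ∧ outDeg A v = 0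

/-- Tree node: any node that is not a reticulation node. -/
def IsTreeNode (A : V → V → Prop) (v : V) : Prop := ¬ IsRet A v

/-- `u` is visible on `v`: every directed path from the root `ρ` to `v` contains `u`. -/
def Visible (A : V → V → Prop) (ρ u v : V) : Prop := ∀ p, IsPath A ρ v p → u ∈ p

/-- A network is reticulation-visible if every reticulation node is visible on some leaf. -/
def RetVisible (A : V → V → Prop) (ρ : V) : Prop :=
  ∀ r, IsRet A r → ∃ ℓ, IsLeaf A ℓ ∧ Visible A ρ r ℓ

/-- Undirected adjacency in the subgraph `N − R(N)` induced on tree nodes. -/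
def TAdj (A : V → V → Prop) (u v : V) : Prop :=
  IsTreeNode A u ∧ IsTreeNode A v ∧ (A u v ∨ A v u)

/-- `S` is a tree node component: a connected component (ignoring directions) of the
subgraph induced on the tree nodes. -/
def IsTNC (A : V → V → Prop) (S : Set V) : Prop :=
  ∃ u, IsTreeNode A u ∧ S = {v | Relation.ReflTransGen (TAdj A) u v}

/-- `r` is the root of the tree node component `S`: it lies in `S` and has indegree 0
within `N − R(N)`, i.e. it has no tree-node parent. -/
def CompRoot (A : V → V → Prop) (S : Set V) (r : V) : Prop :=
  r ∈ S ∧ ∀ u, IsTreeNode A u → ¬ A u r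

/-- Tree node component `C'` is below tree node component `C''`. -/
def Below (A : V → V → Prop) (C' C'' : Set V) : Prop :=
  ∃ r, IsRet A r ∧ (∃ c, A r c ∧ CompRoot A C' c) ∧ (∃ p ∈ C'', A p r)

/-- A big tree node component: a tree node component with at least two nodes. -/
def BigTNC (A : V → V → Prop) (C : Set V) : Prop :=
  IsTNC A C ∧ ∃ a ∈ C, ∃ b ∈ C, a ≠ b

/-- A single-leaf component: its node set is `{ℓ}` for some leaf `ℓ`. -/
def SingleLeafTNC (A : V → V → Prop) (C : Set V) : Prop :=
  ∃ ℓ, IsLeaf A ℓ ∧ C = {ℓ}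

/-- A lowest big tree node component: a big tree node component `C` such that every
tree node component whose root is a proper descendant of the root of `C` is a
single-leaf component. -/
def LowestBig (A : V → V → Prop) (C : Set V) : Prop :=
  BigTNC A C ∧ ∀ C' r' rC, IsTNC A C' → CompRoot A C' r' → CompRoot A C rC →
    Relation.TransGen A rC r' → SingleLeafTNC A C'

/-- An inner reticulation: all of its parents lie in one and the same tree node component. -/
def InnerRet (A : V → V → Prop) (r : V) : Prop :=
  IsRet A r ∧ ∃ S, IsTNC A S ∧ ∀ p, A p r → p ∈ S

/-- `IR(C)`: reticulations all of whose parents lie in `C`. -/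
def IRset (A : V → V → Prop) (C : Set V) : Set V :=
  {r | IsRet A r ∧ ∀ p, A p r → p ∈ C}

/-- `CR(C)`: reticulations with at least one parent in `C` and at least one parent outside `C`. -/
def CRset (A : V → V → Prop) (C : Set V) : Set V :=
  {r | IsRet A r ∧ (∃ p, A p r ∧ p ∈ C) ∧ (∃ p, A p r ∧ p ∉ C)}

/-- `L_C`: the leaves of the network lying in `C` together with the children of the
inner reticulations below `C`. -/
def LCset (A : V → V → Prop) (C : Set V) : Set V :=
  {ℓ | ℓ ∈ C ∧ IsLeaf A ℓ} ∪ {x | ∃ r ∈ IRset A C, A r x}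

/-- Bicombining: every reticulation node has indegree exactly 2. -/
def Bicombining (A : V → V → Prop) : Prop := ∀ r, IsRet A r → inDeg A r = 2

/-- Galled: every reticulation node `r` has an ancestor `u` admitting two
internal-node-disjoint directed paths from `u` to `r` in which every node other
than `r` is a tree node. -/
def Galled (A : V → V → Prop) : Prop :=
  ∀ r, IsRet A r → ∃ u, Relation.TransGen A u r ∧ ∃ p₁ p₂ : List V,
    IsPath A u r p₁ ∧ IsPath A u r p₂ ∧ p₁ ≠ p₂ ∧
    (∀ x, x ∈ p₁ → x ∈ p₂ → x = u ∨ x = r) ∧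
    (∀ x ∈ p₁, x ≠ r → IsTreeNode A x) ∧ (∀ x ∈ p₂, x ≠ r → IsTreeNode A x)

/-- Restriction of a digraph to a vertex subset. -/
def Restrict (A : V → V → Prop) (S : Set V) : V → V → Prop :=
  fun a b => a ∈ S ∧ b ∈ S ∧ A a b

/-- Descendants of `u` (including `u`); the vertex set of the subnetwork `D_N(u)`. -/
def Desc (A : V → V → Prop) (u : V) : Set V := {v | Relation.ReflTransGen A u v}

/-- Binary network: the root has outdegree 2, leaves have degree 1, and every other
node has total degree 3. -/
def IsBinary (A : V → V → Prop) (ρ : V) : Prop :=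
  outDeg A ρ = 2 ∧ ∀ v, v ≠ ρ →
    (inDeg A v = 1 ∧ outDeg A v = 0) ∨ (inDeg A v = 1 ∧ outDeg A v = 2) ∨
    (inDeg A v = 2 ∧ outDeg A v = 1)

/-- A phylogenetic tree: a network with no reticulation nodes. -/
def IsPhyloTree (A : W → W → Prop) (ρ : W) : Prop :=
  IsNetwork A ρ ∧ ∀ w, ¬ IsRet A w

/-- A node with indegree 1 and outdegree 1 (a suppressible node). -/
def Deg11 (A : V → V → Prop) (v : V) : Prop := inDeg A v = 1 ∧ outDeg A v = 1

/-- There is a directed path from `a` to `b` (of length ≥ 1) all of whose internal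
nodes are suppressible. -/
def SubdivPath (A : V → V → Prop) (a b : V) : Prop :=
  ∃ p : List V, IsPath A a b p ∧ 2 ≤ p.length ∧ ∀ z ∈ p, z ≠ a → z ≠ b → Deg11 A z

/-- `φ` witnesses that the digraph `A'` on the vertex set `S` is a subdivision of the
tree `AT` restricted to the vertex set `SW`: `φ` injectively maps the tree nodes onto
the non-suppressible nodes, edges of the tree correspond exactly to directed paths
whose internal nodes are suppressible, and leaves are mapped according to the leaf
correspondence `θ` (same labels). -/
def SubdivWitness (A' : V → V → Prop) (S : Set V) (AT : W → W → Prop) (SW : Set W)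
    (θ : W → V) (φ : W → V) : Prop :=
  Set.InjOn φ SW ∧ (∀ w ∈ SW, φ w ∈ S) ∧
  (∀ x ∈ S, ¬ Deg11 (Restrict A' S) x → ∃ w ∈ SW, φ w = x) ∧
  (∀ x ∈ SW, ∀ y ∈ SW, (Restrict AT SW x y ↔ SubdivPath (Restrict A' S) (φ x) (φ y))) ∧
  (∀ w ∈ SW, outDeg (Restrict AT SW) w = 0 → φ w = θ w)

/-- The digraph `A'` on vertex set `S` is a subdivision of the tree `AT` on `SW`. -/
def IsSubdivisionOf (A' : V → V → Prop) (S : Set V) (AT : W → W → Prop) (SW : Set W)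
    (θ : W → V) : Prop :=
  ∃ φ, SubdivWitness A' S AT SW θ φ

/-- `E`, `D`, `φ` witness that the subnetwork of `A` on vertex set `S` displays the
subtree of `AT` on vertex set `SW`: `E` is a set of reticulation edges of the
subnetwork containing all but one of the incoming edges of each reticulation node of
the subnetwork, `D` is a set of deleted nodes, and `φ` witnesses that the result is a
subdivision of the subtree. -/
def DisplayWitness (A : V → V → Prop) (S : Set V) (AT : W → W → Prop) (SW : Set W)
    (θ : W → V) (E : Set (V × V)) (D : Set V) (φ : W → V) : Prop :=
  (∀ e ∈ E, Restrict A S e.1 e.2 ∧ 2 ≤ inDeg (Restrict A S) e.2) ∧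
  (∀ r ∈ S, 2 ≤ inDeg (Restrict A S) r →
     ∃ p, Restrict A S p r ∧ (p, r) ∉ E ∧ ∀ q, Restrict A S q r → q ≠ p → (q, r) ∈ E) ∧
  SubdivWitness (fun a b => Restrict A S a b ∧ (a, b) ∉ E) (S \ D) AT SW θ φ

/-- The subnetwork of `A` on vertex set `S` displays the subtree of `AT` on `SW`. -/
def DisplaysOn (A : V → V → Prop) (S : Set V) (AT : W → W → Prop) (SW : Set W)
    (θ : W → V) : Prop :=
  ∃ E D φ, DisplayWitness A S AT SW θ E D φ

/-- The leaves of the subnetwork of `A` induced on vertex set `S`. -/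
def SubLeaves (A : V → V → Prop) (S : Set V) : Set V :=
  {v | v ∈ S ∧ outDeg (Restrict A S) v = 0}

/-- `B` is a soft cluster in the subnetwork of `A` on vertex set `S`: `B` is the
cluster of some node of some phylogenetic tree displayed by that subnetwork. -/
def SoftClusterOn (A : V → V → Prop) (S : Set V) (B : Set V) : Prop :=
  ∃ (W : Type) (AT : W → W → Prop) (ρT : W) (θ : W → V),
    IsPhyloTree AT ρT ∧
    Set.BijOn θ {w | IsLeaf AT w} (SubLeaves A S) ∧
    DisplaysOn A S AT Set.univ θ ∧
    ∃ x : W, θ '' {w | IsLeaf AT w ∧ Relation.ReflTransGen AT x w} = B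

/-- `B` is a soft cluster of the node `u` of `N`: there are `E` and `D` as in the
definition of display such that `u` is a node of `(N − E) − D` and the set of leaves
of `N` below `u` in `(N − E) − D` equals `B`. -/
def SoftClusterAt (A : V → V → Prop) (u : V) (B : Set V) : Prop :=
  ∃ (E : Set (V × V)) (D : Set V),
    (∀ e ∈ E, A e.1 e.2 ∧ 2 ≤ inDeg A e.2) ∧
    (∀ r, 2 ≤ inDeg A r → ∃ p, A p r ∧ (p, r) ∉ E ∧ ∀ q, A q r → q ≠ p → (q, r) ∈ E) ∧
    (∃ (W : Type) (AT : W → W → Prop) (ρT : W) (θ : W → V),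
      IsPhyloTree AT ρT ∧ Set.BijOn θ {w | IsLeaf AT w} {v | IsLeaf A v} ∧
      IsSubdivisionOf (fun a b => A a b ∧ (a, b) ∉ E) (Set.univ \ D) AT Set.univ θ) ∧
    u ∉ D ∧
    {ℓ | IsLeaf A ℓ ∧
      Relation.ReflTransGen (fun a b => A a b ∧ (a, b) ∉ E ∧ a ∉ D ∧ b ∉ D) u ℓ} = B

/-- `w` is the lowest common ancestor of the set `X` in the (tree-like) digraph `A`. -/
def IsLCAIn (A : V → V → Prop) (X : Set V) (w : V) : Prop :=
  (∀ x ∈ X, Relation.ReflTransGen A w x) ∧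
  ∀ w', (∀ x ∈ X, Relation.ReflTransGen A w' x) → Relation.ReflTransGen A w' w

end PhyloNet


/-!
Deleting the reticulations splits the tree nodes into components, each hanging from a head;
the heads are the root and the children of the reticulations, so there are `|R| + 1` of them.
In a galled bicombining network both parents of a reticulation lie in one component, to which
the reticulation is charged. A lowest node of a component is either a leaf or has at least two
children, all reticulations charged to that component. So every component contains a leaf or is
charged two reticulations, whence `2 (|R| + 1) ≤ |R| + 2n`.
-/

namespace Finset

theorem two_mul_card_le_card_add_two_mul_card {α β γ : Type*} [DecidableEq β]
    {H : Finset β} {R : Finset α} {L : Finset γ} {f : α → β} {g : γ → β}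
    (hH : ∀ b ∈ H, (∃ l ∈ L, g l = b) ∨ ∃ r₁ ∈ R, ∃ r₂ ∈ R, r₁ ≠ r₂ ∧ f r₁ = b ∧ f r₂ = b) :
    2 * #H ≤ #R + 2 * #L := by
  classical
  set P : β → Prop := fun b => ∃ l ∈ L, g l = b
  have hL : #(H.filter P) ≤ #L :=
    calc #(H.filter P) ≤ #(L.image g) := card_le_card fun b hb => by
          obtain ⟨l, hl, rfl⟩ := (mem_filter.1 hb).2
          exact mem_image_of_mem g hl
      _ ≤ #L := card_image_le
  have hR : 2 * #(H.filter (¬ P ·)) ≤ #R :=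
    calc 2 * #(H.filter (¬ P ·)) ≤ #(R.filter (f · ∈ H.filter (¬ P ·))) := by
          refine mul_card_image_le_card_of_maps_to (fun r hr => (mem_filter.1 hr).2) 2
            fun b hb => ?_
          obtain ⟨hbH, hbP⟩ := mem_filter.1 hb
          obtain ⟨r₁, hr₁, r₂, hr₂, hne, rfl, h₂⟩ := (hH _ hbH).resolve_left hbP
          exact one_lt_card.2 ⟨r₁, by simp [*], r₂, by simp [*], hne⟩
      _ ≤ #R := card_filter_le _ _
  have := card_filter_add_card_filter_not (s := H) P
  omega

end Finset

theorem Set.eq_of_mem_of_ncard_eq_one {α : Type*} {s : Set α} {a b : α} (hs : s.ncard = 1)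
    (ha : a ∈ s) (hb : b ∈ s) : a = b := by
  obtain ⟨c, rfl⟩ := Set.ncard_eq_one.1 hs
  exact ha.trans hb.symm

namespace PhyloNet

open Relation

variable {V : Type} {A : V → V → Prop} {ρ u v r x : V} {p q : List V}

theorem IsPath.pairwise_transGen (hp : IsPath A u v p) : p.Pairwise (TransGen A) :=
  List.isChain_iff_pairwise.1 (hp.1.imp fun _ _ => TransGen.single)

theorem IsPath.nodup (hA : ∀ v, ¬ TransGen A v v) (hp : IsPath A u v p) : p.Nodup :=
  hp.pairwise_transGen.imp (S := (· ≠ ·)) fun {a _} h he => hA a (by rwa [← he] at h)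

theorem IsPath.eq_singleton (hA : ∀ v, ¬ TransGen A v v) (hp : IsPath A u u p) : p = [u] := by
  obtain ⟨t, rfl⟩ := List.head?_eq_some_iff.1 hp.2.1
  cases t with
  | nil => rfl
  | cons y t =>
    have hu : u ∈ y :: t := List.mem_of_getLast? (by simpa using hp.2.2)
    exact absurd (List.rel_of_pairwise_cons hp.pairwise_transGen hu) (hA u)

theorem IsPath.reflTransGen_of_forall_mem {P : V → Prop} (hp : IsPath A u v p)
    (hP : ∀ x ∈ p, P x) : ReflTransGen (fun a b => A a b ∧ P a ∧ P b) u v := by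
  obtain ⟨hc, hh, hl⟩ := hp
  cases p with
  | nil => simp at hh
  | cons x t =>
    obtain rfl : x = u := by simpa using hh
    refine List.relationReflTransGen_of_exists_isChain_cons t
      (hc.imp_of_mem_imp fun a b ha hb hab => ⟨hab, hP a ha, hP b hb⟩) ?_
    rw [List.getLast?_eq_some_getLast (List.cons_ne_nil _ _)] at hl
    exact Option.some_injective _ hl

theorem IsPath.exists_eq_append_pair (hp : IsPath A u v p) (huv : u ≠ v) :
    ∃ q x, p = q ++ [x, v] ∧ IsPath A u x (q ++ [x]) ∧ A x v := by
  obtain ⟨hc, hh, hl⟩ := hp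
  obtain ⟨l, rfl⟩ := List.getLast?_eq_some_iff.1 hl
  rcases List.eq_nil_or_concat' l with rfl | ⟨q, x, rfl⟩
  · simp_all
  · have hc' := List.isChain_append.1 hc
    refine ⟨q, x, by simp, ⟨hc'.1, by simpa using hh, by simp⟩, hc'.2.2 x (by simp) v (by simp)⟩

namespace IsNetwork

theorem not_adj_root (hN : IsNetwork A ρ) (u : V) : ¬ A u ρ :=
  have := hN.finite
  Set.eq_empty_iff_forall_notMem.1 ((Set.ncard_eq_zero (Set.toFinite _)).1 hN.root_indeg) u

theorem isTreeNode_root (hN : IsNetwork A ρ) : IsTreeNode A ρ := fun h => by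
  have := h.1
  have := hN.root_indeg
  omega

theorem eq_of_adj_of_adj {a b : V} (hN : IsNetwork A ρ) (hv : v ≠ ρ) (ht : IsTreeNode A v)
    (ha : A a v) (hb : A b v) : a = b :=
  Set.eq_of_mem_of_ncard_eq_one ((hN.degree_cond v hv).resolve_right ht).1 ha hb

theorem isLeaf_or_two_le_outDeg (hN : IsNetwork A ρ) (ht : IsTreeNode A v) :
    IsLeaf A v ∨ 2 ≤ outDeg A v := by
  by_cases hv : v = ρ
  · exact .inr (hv ▸ hN.root_outdeg)
  · obtain ⟨hin, hout | hout⟩ := (hN.degree_cond v hv).resolve_right ht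
    exacts [.inl ⟨hin, hout⟩, .inr hout]

theorem exists_adj_of_ne_root (hN : IsNetwork A ρ) (hv : v ≠ ρ) : ∃ p, A p v := by
  obtain ⟨p, -, hp⟩ := ((hN.reach_from_root v).cases_tail).resolve_left hv
  exact ⟨p, hp⟩

theorem wellFounded_transGen (hN : IsNetwork A ρ) : WellFounded (TransGen A) :=
  have := hN.finite
  have : Std.Irrefl (TransGen A) := ⟨hN.acyclic⟩
  Finite.wellFounded_of_trans_of_irrefl _

theorem wellFounded_swap_transGen (hN : IsNetwork A ρ) :
    WellFounded (Function.swap (TransGen A)) :=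
  have := hN.finite
  have : Std.Irrefl (Function.swap (TransGen A)) := ⟨hN.acyclic⟩
  Finite.wellFounded_of_trans_of_irrefl _

end IsNetwork

def TreeEdge (A : V → V → Prop) (a b : V) : Prop := A a b ∧ IsTreeNode A a ∧ IsTreeNode A b

def IsHeadOf (A : V → V → Prop) (h v : V) : Prop :=
  ReflTransGen (TreeEdge A) h v ∧ ∀ p, ¬ TreeEdge A p h

def heads (A : V → V → Prop) : Set V := {h | IsTreeNode A h ∧ ∀ p, ¬ TreeEdge A p h}

theorem IsNetwork.exists_isHeadOf (hN : IsNetwork A ρ) (v : V) : ∃ h, IsHeadOf A h v := by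
  obtain ⟨h, hhv, hmin⟩ := hN.wellFounded_transGen.has_min {h | ReflTransGen (TreeEdge A) h v}
    ⟨v, .refl⟩
  exact ⟨h, hhv, fun p hp => hmin p (.head hp hhv) (.single hp.1)⟩

theorem IsNetwork.isHeadOf_unique {h h' : V} (hN : IsNetwork A ρ) (hh : IsHeadOf A h v)
    (hh' : IsHeadOf A h' v) : h = h' := by
  obtain ⟨hhv, hroot⟩ := hh
  induction hhv generalizing h' with
  | refl =>
    rcases hh'.1.cases_tail with rfl | ⟨c, -, hc⟩
    exacts [rfl, absurd hc (hroot c)]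
  | @tail b c _ hbc ih =>
    rcases hh'.1.cases_tail with rfl | ⟨d, hd, hdc⟩
    · exact absurd hbc (hh'.2 b)
    · obtain rfl := hN.eq_of_adj_of_adj (fun hc => hN.not_adj_root b (hc ▸ hbc.1)) hbc.2.2
        hdc.1 hbc.1
      exact ih ⟨hd, hh'.2⟩

open Classical in
noncomputable def head (A : V → V → Prop) (v : V) : V :=
  if h : ∃ h, IsHeadOf A h v then h.choose else v

theorem IsNetwork.isHeadOf_head (hN : IsNetwork A ρ) (v : V) : IsHeadOf A (head A v) v := by
  rw [head, dif_pos (hN.exists_isHeadOf v)]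
  exact (hN.exists_isHeadOf v).choose_spec

theorem IsNetwork.head_eq {h : V} (hN : IsNetwork A ρ) (hh : IsHeadOf A h v) : head A v = h :=
  hN.isHeadOf_unique (hN.isHeadOf_head v) hh

theorem IsNetwork.head_eq_of_reflTransGen (hN : IsNetwork A ρ)
    (huv : ReflTransGen (TreeEdge A) u v) : head A v = head A u :=
  have hu := hN.isHeadOf_head u
  hN.head_eq ⟨hu.1.trans huv, hu.2⟩

open Classical in
noncomputable def child (A : V → V → Prop) (v : V) : V :=
  if h : ∃ c, A v c then h.choose else v

open Classical in
noncomputable def parent (A : V → V → Prop) (v : V) : V :=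
  if h : ∃ p, A p v then h.choose else v

theorem adj_child (h : ∃ c, A v c) : A v (child A v) := by
  rw [child, dif_pos h]
  exact h.choose_spec

theorem adj_parent (h : ∃ p, A p v) : A (parent A v) v := by
  rw [parent, dif_pos h]
  exact h.choose_spec

theorem IsRet.adj_child (hr : IsRet A r) : A r (child A r) :=
  PhyloNet.adj_child (Set.nonempty_of_ncard_ne_zero (ne_of_eq_of_ne hr.2 one_ne_zero))

theorem IsRet.eq_child {c : V} (hr : IsRet A r) (hc : A r c) : c = child A r :=
  Set.eq_of_mem_of_ncard_eq_one hr.2 hc hr.adj_child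

theorem IsNetwork.child_ne_root (hN : IsNetwork A ρ) (hr : IsRet A r) : child A r ≠ ρ :=
  fun h => hN.not_adj_root r (h ▸ hr.adj_child)

theorem IsPath.reflTransGen_treeEdge (hA : ∀ v, ¬ TransGen A v v)
    (hp : IsPath A u r (q ++ [x, r])) (hpre : IsPath A u x (q ++ [x]))
    (ht : ∀ y ∈ q ++ [x, r], y ≠ r → IsTreeNode A y) :
    ReflTransGen (TreeEdge A) u x := by
  have hr : r ∉ q ++ [x] := by
    have hnd := hp.nodup hA
    rw [show q ++ [x, r] = (q ++ [x]) ++ [r] by simp] at hnd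
    exact fun h => (List.nodup_append.1 hnd).2.2 r h r (by simp) rfl
  exact hpre.reflTransGen_of_forall_mem fun y hy =>
    ht y (by simp only [List.mem_append, List.mem_cons] at hy ⊢; tauto) (by rintro rfl; exact hr hy)

namespace Galled

theorem exists_parents (hN : IsNetwork A ρ) (hbi : Bicombining A) (hg : Galled A)
    (hr : IsRet A r) : ∃ a b, a ≠ b ∧ {p | A p r} = {a, b} ∧ IsTreeNode A a ∧ IsTreeNode A b ∧
      ∃ u, ReflTransGen (TreeEdge A) u a ∧ ReflTransGen (TreeEdge A) u b := by
  have hne_r : ∀ {x}, A x r → x ≠ r := fun hx h => hN.acyclic r (.single (by rwa [h] at hx))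
  obtain ⟨u, hur, p₁, p₂, hp₁, hp₂, hne, hdisj, ht₁, ht₂⟩ := hg r hr
  have hur : u ≠ r := fun h => hN.acyclic r (h ▸ hur)
  obtain ⟨q₁, x₁, rfl, hq₁, hx₁⟩ := hp₁.exists_eq_append_pair hur
  obtain ⟨q₂, x₂, rfl, hq₂, hx₂⟩ := hp₂.exists_eq_append_pair hur
  have hx : x₁ ≠ x₂ := by
    rintro rfl
    obtain rfl : x₁ = u := (hdisj x₁ (by simp) (by simp)).resolve_right (hne_r hx₁)
    obtain rfl : q₁ = [] := by simpa using hq₁.eq_singleton hN.acyclic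
    obtain rfl : q₂ = [] := by simpa using hq₂.eq_singleton hN.acyclic
    exact hne rfl
  have := hN.finite
  refine ⟨x₁, x₂, hx, (Set.eq_of_subset_of_ncard_le ?_ ?_).symm, ht₁ x₁ (by simp) (hne_r hx₁),
    ht₂ x₂ (by simp) (hne_r hx₂), u, hp₁.reflTransGen_treeEdge hN.acyclic hq₁ ht₁,
    hp₂.reflTransGen_treeEdge hN.acyclic hq₂ ht₂⟩
  · rintro z (rfl | rfl)
    exacts [hx₁, hx₂]
  · rw [Set.ncard_pair hx, ← inDeg, hbi r hr]

theorem isTreeNode_of_adj_ret {z : V} (hN : IsNetwork A ρ) (hbi : Bicombining A) (hg : Galled A)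
    (hr : IsRet A r) (hz : A z r) : IsTreeNode A z := by
  obtain ⟨a, b, -, hab, ha, hb, -⟩ := hg.exists_parents hN hbi hr
  rcases (hab ▸ hz : z ∈ ({a, b} : Set V)) with rfl | rfl
  exacts [ha, hb]

theorem head_eq_head_of_adj {z z' : V} (hN : IsNetwork A ρ) (hbi : Bicombining A) (hg : Galled A)
    (hr : IsRet A r) (hz : A z r) (hz' : A z' r) : head A z = head A z' := by
  obtain ⟨a, b, -, hab, -, -, u, hua, hub⟩ := hg.exists_parents hN hbi hr
  have key : ∀ w, A w r → head A w = head A u := by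
    intro w hw
    rcases (hab ▸ hw : w ∈ ({a, b} : Set V)) with rfl | rfl
    exacts [hN.head_eq_of_reflTransGen hua, hN.head_eq_of_reflTransGen hub]
  rw [key z hz, key z' hz']

theorem isTreeNode_child (hN : IsNetwork A ρ) (hbi : Bicombining A) (hg : Galled A)
    (hr : IsRet A r) : IsTreeNode A (child A r) := fun hc =>
  hg.isTreeNode_of_adj_ret hN hbi hc hr.adj_child hr

theorem parent_child (hN : IsNetwork A ρ) (hbi : Bicombining A) (hg : Galled A)
    (hr : IsRet A r) : parent A (child A r) = r :=
  hN.eq_of_adj_of_adj (hN.child_ne_root hr)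
    (hg.isTreeNode_child hN hbi hr) (adj_parent ⟨r, hr.adj_child⟩) hr.adj_child

theorem heads_eq (hN : IsNetwork A ρ) (hbi : Bicombining A) (hg : Galled A) :
    heads A = insert ρ (child A '' {r | IsRet A r}) := by
  ext h
  constructor
  · rintro ⟨ht, hroot⟩
    by_cases hρ : h = ρ
    · exact .inl hρ
    · have hp := adj_parent (hN.exists_adj_of_ne_root hρ)
      have hret : IsRet A (parent A h) := not_not.1 fun hpt => hroot _ ⟨hp, hpt, ht⟩
      exact .inr ⟨_, hret, (hret.eq_child hp).symm⟩
  · rintro (rfl | ⟨r, hr, rfl⟩)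
    · exact ⟨hN.isTreeNode_root, fun p hp => hN.not_adj_root p hp.1⟩
    · have hc := hg.isTreeNode_child hN hbi hr
      refine ⟨hc, fun p hp => ?_⟩
      obtain rfl := hN.eq_of_adj_of_adj (hN.child_ne_root hr) hc hp.1 hr.adj_child
      exact hp.2.1 hr

theorem ncard_heads (hN : IsNetwork A ρ) (hbi : Bicombining A) (hg : Galled A) :
    (heads A).ncard = {r | IsRet A r}.ncard + 1 := by
  have := hN.finite
  have hinj : Set.InjOn (child A) {r | IsRet A r} :=
    Set.LeftInvOn.injOn fun r hr => hg.parent_child hN hbi hr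
  rw [hg.heads_eq hN hbi, Set.ncard_insert_of_notMem, hinj.ncard_image]
  rintro ⟨r, hr, h⟩
  exact hN.child_ne_root hr h

theorem exists_leaf_or_two_rets (hN : IsNetwork A ρ) (hbi : Bicombining A) (hg : Galled A) {h : V}
    (hh : h ∈ heads A) : (∃ ℓ, IsLeaf A ℓ ∧ head A ℓ = h) ∨
      ∃ r₁, IsRet A r₁ ∧ ∃ r₂, IsRet A r₂ ∧ r₁ ≠ r₂ ∧
        head A (parent A r₁) = h ∧ head A (parent A r₂) = h := by
  -- `m` is a lowest node of the component of `h`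
  obtain ⟨m, hhm, hmin⟩ := hN.wellFounded_swap_transGen.has_min
    {v | ReflTransGen (TreeEdge A) h v} ⟨h, .refl⟩
  have hm : IsTreeNode A m := by
    rcases hhm.cases_tail with rfl | ⟨_, -, he⟩
    exacts [hh.1, he.2.2]
  have hmh : head A m = h := hN.head_eq ⟨hhm, hh.2⟩
  have hret : ∀ c, A m c → IsRet A c := fun c hc => not_not.1 fun hct =>
    hmin c (hhm.tail ⟨hc, hm, hct⟩) (.single hc)
  have hrh : ∀ c, A m c → head A (parent A c) = h := fun c hc => by
    rw [← hmh]
    exact hg.head_eq_head_of_adj hN hbi (hret c hc) (adj_parent ⟨m, hc⟩) hc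
  rcases hN.isLeaf_or_two_le_outDeg hm with hl | h2
  · exact .inl ⟨m, hl, hmh⟩
  · have := hN.finite
    obtain ⟨c₁, hc₁, c₂, hc₂, hne⟩ := (Set.one_lt_ncard).1 (h2 : 2 ≤ {c | A m c}.ncard)
    exact .inr ⟨c₁, hret c₁ hc₁, c₂, hret c₂ hc₂, hne, hrh c₁ hc₁, hrh c₂ hc₂⟩

end Galled

/-- Every galled network with `n` leaves has at most `2(n − 1)` reticulation nodes. -/
theorem galled_ret_bound {V : Type} (A : V → V → Prop) (ρ : V)
    (hN : IsNetwork A ρ) (hbi : Bicombining A) (hg : Galled A)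
    (n : ℕ) (hn : {v | IsLeaf A v}.ncard = n) :
    {r | IsRet A r}.ncard ≤ 2 * (n - 1) := by
  classical
  have := hN.finite
  have := Fintype.ofFinite V
  have hcount := Finset.two_mul_card_le_card_add_two_mul_card
    (H := (heads A).toFinset) (R := {r | IsRet A r}.toFinset) (L := {v | IsLeaf A v}.toFinset)
    (f := fun r => head A (parent A r)) (g := head A)
    (by simpa using fun h hh => hg.exists_leaf_or_two_rets hN hbi hh)
  simp only [← Set.ncard_eq_toFinset_card'] at hcount
  have := hg.ncard_heads hN hbi
  omega

end PhyloNet
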